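/- Let (p,q) ∈ ℤ^n × ℕ with gcd(p,q) = 1, let r = gcd(p), and let γ_p ∈ SL_n(ℤ) with p = r·e_n·γ_p. Let f : ℝ^n → ℂ be bounded and compactly supported. Then for every g ∈ SL_n(ℝ), the Siegel transform of f at the affine lattice Λ = (ℤ^n + p/q)·g satisfies f̂(Λ) = Σ_{k ≥ 1, gcd(k,q)=1} Θ_{f_{k/q}}^{n,q}(τ_{[k·r̄]}·γ_p·g), where f_{k/q}(x) = f(k·x/q), r̄ is an inverse of r mod q, and the sum has only finitely many nonzero terms. -/

import Mathlib

open MeasureTheory Matrix Filter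
open scoped ENNReal

noncomputable section

abbrev SLR (n : ℕ) := Matrix.SpecialLinearGroup (Fin n) ℝ
abbrev SLZ (n : ℕ) := Matrix.SpecialLinearGroup (Fin n) ℤ

instance SLRTop (n : ℕ) : TopologicalSpace (SLR n) :=
  inferInstanceAs (TopologicalSpace {A : Matrix (Fin n) (Fin n) ℝ // A.det = 1})

def ιR (n : ℕ) : SLZ n →* SLR n := Matrix.SpecialLinearGroup.map (Int.castRingHom ℝ)

def SLZsub (n : ℕ) : Subgroup (SLR n) := (ιR n).range

def en (n : ℕ) : Fin n → ℤ := fun i => if (i : ℕ) = n - 1 then 1 else 0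
def enR (n : ℕ) : Fin n → ℝ := fun i => if (i : ℕ) = n - 1 then 1 else 0
def enM (n q : ℕ) : Fin n → ZMod q := fun i => if (i : ℕ) = n - 1 then 1 else 0

def ιM (n q : ℕ) : SLZ n →* Matrix.SpecialLinearGroup (Fin n) (ZMod q) :=
  Matrix.SpecialLinearGroup.map (Int.castRingHom (ZMod q))

def Gamma1 (n q : ℕ) : Subgroup (SLZ n) where
  carrier := {γ | Matrix.vecMul (enM n q) ((ιM n q γ : Matrix.SpecialLinearGroup (Fin n) (ZMod q)) : Matrix (Fin n) (Fin n) (ZMod q)) = enM n q}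
  one_mem' := by simp
  mul_mem' := by
    intro a b ha hb
    have ha' : Matrix.vecMul (enM n q) ((ιM n q a : Matrix.SpecialLinearGroup (Fin n) (ZMod q)) : Matrix (Fin n) (Fin n) (ZMod q)) = enM n q := ha
    have hb' : Matrix.vecMul (enM n q) ((ιM n q b : Matrix.SpecialLinearGroup (Fin n) (ZMod q)) : Matrix (Fin n) (Fin n) (ZMod q)) = enM n q := hb
    show Matrix.vecMul (enM n q) ((ιM n q (a * b) : Matrix.SpecialLinearGroup (Fin n) (ZMod q)) : Matrix (Fin n) (Fin n) (ZMod q)) = enM n q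
    rw [_root_.map_mul, Matrix.SpecialLinearGroup.coe_mul, ← Matrix.vecMul_vecMul, ha', hb']
  inv_mem' := by
    intro a ha
    have ha' : Matrix.vecMul (enM n q) ((ιM n q a : Matrix.SpecialLinearGroup (Fin n) (ZMod q)) : Matrix (Fin n) (Fin n) (ZMod q)) = enM n q := ha
    show Matrix.vecMul (enM n q) ((ιM n q a⁻¹ : Matrix.SpecialLinearGroup (Fin n) (ZMod q)) : Matrix (Fin n) (Fin n) (ZMod q)) = enM n q
    rw [_root_.map_inv]
    have key : ((ιM n q a : Matrix.SpecialLinearGroup (Fin n) (ZMod q)) : Matrix (Fin n) (Fin n) (ZMod q)) *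
        (((ιM n q a)⁻¹ : Matrix.SpecialLinearGroup (Fin n) (ZMod q)) : Matrix (Fin n) (Fin n) (ZMod q)) = 1 := by
      rw [← Matrix.SpecialLinearGroup.coe_mul, mul_inv_cancel]
      simp
    calc Matrix.vecMul (enM n q) (((ιM n q a)⁻¹ : Matrix.SpecialLinearGroup (Fin n) (ZMod q)) : Matrix (Fin n) (Fin n) (ZMod q))
        = Matrix.vecMul (Matrix.vecMul (enM n q) ((ιM n q a : Matrix.SpecialLinearGroup (Fin n) (ZMod q)) : Matrix (Fin n) (Fin n) (ZMod q))) (((ιM n q a)⁻¹ : Matrix.SpecialLinearGroup (Fin n) (ZMod q)) : Matrix (Fin n) (Fin n) (ZMod q)) := by rw [ha']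
      _ = Matrix.vecMul (enM n q) (((ιM n q a : Matrix.SpecialLinearGroup (Fin n) (ZMod q)) : Matrix (Fin n) (Fin n) (ZMod q)) * (((ιM n q a)⁻¹ : Matrix.SpecialLinearGroup (Fin n) (ZMod q)) : Matrix (Fin n) (Fin n) (ZMod q))) := Matrix.vecMul_vecMul _ _ _
      _ = enM n q := by rw [key, Matrix.vecMul_one]

def LZ (n : ℕ) : Subgroup (SLZ n) where
  carrier := {γ | Matrix.vecMul (en n) ((γ : SLZ n) : Matrix (Fin n) (Fin n) ℤ) = en n}
  one_mem' := by simp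
  mul_mem' := by
    intro a b ha hb
    have ha' : Matrix.vecMul (en n) ((a : SLZ n) : Matrix (Fin n) (Fin n) ℤ) = en n := ha
    have hb' : Matrix.vecMul (en n) ((b : SLZ n) : Matrix (Fin n) (Fin n) ℤ) = en n := hb
    show Matrix.vecMul (en n) ((a * b : SLZ n) : Matrix (Fin n) (Fin n) ℤ) = en n
    rw [Matrix.SpecialLinearGroup.coe_mul, ← Matrix.vecMul_vecMul, ha', hb']
  inv_mem' := by
    intro a ha
    have ha' : Matrix.vecMul (en n) ((a : SLZ n) : Matrix (Fin n) (Fin n) ℤ) = en n := ha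
    show Matrix.vecMul (en n) ((a⁻¹ : SLZ n) : Matrix (Fin n) (Fin n) ℤ) = en n
    have key : ((a : Matrix (Fin n) (Fin n) ℤ)) * ((a⁻¹ : SLZ n) : Matrix (Fin n) (Fin n) ℤ) = 1 := by
      rw [← Matrix.SpecialLinearGroup.coe_mul, mul_inv_cancel]
      simp
    calc Matrix.vecMul (en n) ((a⁻¹ : SLZ n) : Matrix (Fin n) (Fin n) ℤ)
        = Matrix.vecMul (Matrix.vecMul (en n) (a : Matrix (Fin n) (Fin n) ℤ)) ((a⁻¹ : SLZ n) : Matrix (Fin n) (Fin n) ℤ) := by rw [ha']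
      _ = Matrix.vecMul (en n) ((a : Matrix (Fin n) (Fin n) ℤ) * ((a⁻¹ : SLZ n) : Matrix (Fin n) (Fin n) ℤ)) := Matrix.vecMul_vecMul _ _ _
      _ = en n := by rw [key, Matrix.vecMul_one]

/-- The map from the coset space `(Γ ∩ L_n)\Γ` to `ℤⁿ` induced by `γ ↦ e_n·γ`. -/
def cosetVec (n : ℕ) (Γ : Subgroup (SLZ n)) :
    Quotient (QuotientGroup.rightRel ((LZ n).subgroupOf Γ)) → (Fin n → ℤ) :=
  fun c => Quotient.liftOn c
    (fun γ => Matrix.vecMul (en n) (((γ : Γ) : SLZ n) : Matrix (Fin n) (Fin n) ℤ))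
    (by
      intro a b hab
      have hab' : (b * a⁻¹ : Γ) ∈ (LZ n).subgroupOf Γ := QuotientGroup.rightRel_apply.mp hab
      have h : Matrix.vecMul (en n) (((b * a⁻¹ : Γ) : SLZ n) : Matrix (Fin n) (Fin n) ℤ) = en n :=
        Subgroup.mem_subgroupOf.mp hab'
      show Matrix.vecMul (en n) (((a : Γ) : SLZ n) : Matrix (Fin n) (Fin n) ℤ)
          = Matrix.vecMul (en n) (((b : Γ) : SLZ n) : Matrix (Fin n) (Fin n) ℤ)
      have hb : (((b : Γ) : SLZ n) : Matrix (Fin n) (Fin n) ℤ)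
          = (((b * a⁻¹ : Γ) : SLZ n) : Matrix (Fin n) (Fin n) ℤ) * (((a : Γ) : SLZ n) : Matrix (Fin n) (Fin n) ℤ) := by
        rw [← Matrix.SpecialLinearGroup.coe_mul]
        congr 1
        simp only [Subgroup.coe_mul, InvMemClass.coe_inv]
        group
        try rfl
      rw [hb, ← Matrix.vecMul_vecMul, h])

/-- The incomplete Eisenstein series `Θ_f^Γ`: the sum of `f(e_n·γ·g)` over the
coset space `(Γ ∩ L_n)\Γ`. -/
def Theta (n : ℕ) (Γ : Subgroup (SLZ n)) (f : (Fin n → ℝ) → ℂ) (g : SLR n) : ℂ :=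
  ∑' c : Quotient (QuotientGroup.rightRel ((LZ n).subgroupOf Γ)),
    f (Matrix.vecMul (fun i => ((cosetVec n Γ c) i : ℝ)) (g : Matrix (Fin n) (Fin n) ℝ))
/-- The real stabilizer `L_n ≤ SL_n(ℝ)` of `e_n`. -/
def LR (n : ℕ) : Subgroup (SLR n) where
  carrier := {g | Matrix.vecMul (enR n) ((g : SLR n) : Matrix (Fin n) (Fin n) ℝ) = enR n}
  one_mem' := by simp
  mul_mem' := by
    intro a b ha hb
    have ha' : Matrix.vecMul (enR n) ((a : SLR n) : Matrix (Fin n) (Fin n) ℝ) = enR n := ha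
    have hb' : Matrix.vecMul (enR n) ((b : SLR n) : Matrix (Fin n) (Fin n) ℝ) = enR n := hb
    show Matrix.vecMul (enR n) ((a * b : SLR n) : Matrix (Fin n) (Fin n) ℝ) = enR n
    rw [Matrix.SpecialLinearGroup.coe_mul, ← Matrix.vecMul_vecMul, ha', hb']
  inv_mem' := by
    intro a ha
    have ha' : Matrix.vecMul (enR n) ((a : SLR n) : Matrix (Fin n) (Fin n) ℝ) = enR n := ha
    show Matrix.vecMul (enR n) ((a⁻¹ : SLR n) : Matrix (Fin n) (Fin n) ℝ) = enR n
    have key : ((a : Matrix (Fin n) (Fin n) ℝ)) * ((a⁻¹ : SLR n) : Matrix (Fin n) (Fin n) ℝ) = 1 := by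
      rw [← Matrix.SpecialLinearGroup.coe_mul, mul_inv_cancel]; simp
    calc Matrix.vecMul (enR n) ((a⁻¹ : SLR n) : Matrix (Fin n) (Fin n) ℝ)
        = Matrix.vecMul (Matrix.vecMul (enR n) (a : Matrix (Fin n) (Fin n) ℝ)) ((a⁻¹ : SLR n) : Matrix (Fin n) (Fin n) ℝ) := by rw [ha']
      _ = Matrix.vecMul (enR n) ((a : Matrix (Fin n) (Fin n) ℝ) * ((a⁻¹ : SLR n) : Matrix (Fin n) (Fin n) ℝ)) := Matrix.vecMul_vecMul _ _ _
      _ = enR n := by rw [key, Matrix.vecMul_one]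

/-- The identity component `P_n ≤ SL_n(ℝ)` of the maximal parabolic subgroup fixing the
line spanned by `e_n`: those `g` with `e_n·g = c·e_n` for some `c > 0`. -/
def PR (n : ℕ) : Subgroup (SLR n) where
  carrier := {g | ∃ c : ℝ, 0 < c ∧
    Matrix.vecMul (enR n) ((g : SLR n) : Matrix (Fin n) (Fin n) ℝ) = c • enR n}
  one_mem' := ⟨1, one_pos, by simp⟩
  mul_mem' := by
    rintro a b ⟨c, hc, hca⟩ ⟨d, hd, hdb⟩
    refine ⟨c * d, mul_pos hc hd, ?_⟩
    show Matrix.vecMul (enR n) ((a * b : SLR n) : Matrix (Fin n) (Fin n) ℝ) = (c * d) • enR n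
    rw [Matrix.SpecialLinearGroup.coe_mul, ← Matrix.vecMul_vecMul, hca,
      Matrix.smul_vecMul, hdb, smul_smul]
  inv_mem' := by
    rintro a ⟨c, hc, hca⟩
    refine ⟨c⁻¹, inv_pos.mpr hc, ?_⟩
    show Matrix.vecMul (enR n) ((a⁻¹ : SLR n) : Matrix (Fin n) (Fin n) ℝ) = c⁻¹ • enR n
    have key : ((a : Matrix (Fin n) (Fin n) ℝ)) * ((a⁻¹ : SLR n) : Matrix (Fin n) (Fin n) ℝ) = 1 := by
      rw [← Matrix.SpecialLinearGroup.coe_mul, mul_inv_cancel]; simp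
    have h2 : c • Matrix.vecMul (enR n) ((a⁻¹ : SLR n) : Matrix (Fin n) (Fin n) ℝ) = enR n := by
      rw [← Matrix.smul_vecMul, ← hca, Matrix.vecMul_vecMul, key, Matrix.vecMul_one]
    have h3 := congrArg (fun w => c⁻¹ • w) h2
    simpa [smul_smul, inv_mul_cancel₀ (ne_of_gt hc)] using h3
/-- The Euclidean norm on `ℝⁿ`. -/
def eNorm (n : ℕ) (v : Fin n → ℝ) : ℝ := Real.sqrt (∑ i : Fin n, (v i) ^ 2)

/-- The standard quadratic form `Q₀` of signature `(p₁, n − p₁)`. -/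
def Q0 (n p₁ : ℕ) (v : Fin n → ℝ) : ℝ := ∑ i : Fin n, if (i : ℕ) < p₁ then (v i) ^ 2 else -((v i) ^ 2)

/-- The Riemann zeta value `ζ(n) = Σ_{k ≥ 1} k⁻ⁿ`. -/
def zetaN (n : ℕ) : ℝ := ∑' k : {k : ℕ // 0 < k}, ((k.1 : ℝ))⁻¹ ^ n

/-- `ζ_q(n) = Σ_{k ≥ 1, gcd(k,q) = 1} k⁻ⁿ`. -/
def zetaCop (q n : ℕ) : ℝ := ∑' k : {k : ℕ // 0 < k ∧ Nat.Coprime k q}, ((k.1 : ℝ))⁻¹ ^ n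

/-- The Siegel transform `f̂(Λ) = Σ_{v ∈ Λ∖{0}} f(v)`. -/
def Siegel (n : ℕ) (f : (Fin n → ℝ) → ℂ) (Λ : Set (Fin n → ℝ)) : ℂ :=
  ∑' v : {x : Fin n → ℝ // x ∈ Λ ∧ x ≠ 0}, f v

/-- The affine lattice `(ℤⁿ + α)·g` (row vector action). -/
def affLat (n : ℕ) (α : Fin n → ℝ) (g : SLR n) : Set (Fin n → ℝ) :=
  {x | ∃ v : Fin n → ℤ, x = Matrix.vecMul (fun i => (v i : ℝ) + α i) ((g : SLR n) : Matrix (Fin n) (Fin n) ℝ)}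

/-- The number of points of `Λ` in `A`, valued in `ℝ≥0∞`. -/
def latCount (n : ℕ) (Λ A : Set (Fin n → ℝ)) : ℝ≥0∞ := ∑' _ : ↥(Λ ∩ A), (1 : ℝ≥0∞)

/-- The discrepancy `D(Λ,A) = |#(Λ∩A) − vol(A)|`, valued in `ℝ≥0∞`. -/
def disc (n : ℕ) (Λ A : Set (Fin n → ℝ)) : ℝ≥0∞ :=
  (latCount n Λ A - volume A) + (volume A - latCount n Λ A)

/-- `⟨α⟩`: the sup-norm distance from `α` to `ℤⁿ`. -/
def distZ (n : ℕ) (α : Fin n → ℝ) : ℝ := ⨅ v : Fin n → ℤ, ‖α - fun i => (v i : ℝ)‖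

/-- `m` is a best simultaneous Diophantine approximation denominator of `α`. -/
def IsBestDenom (n : ℕ) (α : Fin n → ℝ) (m : ℕ) : Prop :=
  0 < m ∧ ∀ l : ℕ, 1 ≤ l → l < m →
    distZ n (fun i => (m : ℝ) * α i) < distZ n (fun i => (l : ℝ) * α i)

/-- The defining set of the Diophantine exponent `ω_α`. -/
def omegaSet (n : ℕ) (α : Fin n → ℝ) : Set ℝ :=
  {ν | 0 < ν ∧ ∀ T : ℝ, ∃ t : ℝ, T < t ∧ ∃ m : ℤ, m ≠ 0 ∧ |(m : ℝ)| < t ∧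
    distZ n (fun i => (m : ℝ) * α i) < t ^ (-ν)}

/-- The defining set of the uniform Diophantine exponent `ω̂_α`. -/
def omegaHatSet (n : ℕ) (α : Fin n → ℝ) : Set ℝ :=
  {ν | 0 < ν ∧ ∃ T : ℝ, ∀ t : ℝ, T ≤ t → ∃ m : ℤ, m ≠ 0 ∧ |(m : ℝ)| < t ∧
    distZ n (fun i => (m : ℝ) * α i) < t ^ (-ν)}

/-- The Diophantine exponent `ω_α`. -/
def dioExp (n : ℕ) (α : Fin n → ℝ) : ℝ := sSup (omegaSet n α)

/-- The uniform Diophantine exponent `ω̂_α`. -/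
def dioExpHat (n : ℕ) (α : Fin n → ℝ) : ℝ := sSup (omegaHatSet n α)

/-- `α ∈ ℝⁿ` is an irrational vector, i.e. `α ∉ ℚⁿ`. -/
def IsIrrationalVec (n : ℕ) (α : Fin n → ℝ) : Prop := ∀ v : Fin n → ℚ, α ≠ fun i => (v i : ℝ)

/-- The open Euclidean ball `B_t` of radius `t` centered at the origin. -/
def ball0 (n : ℕ) (t : ℝ) : Set (Fin n → ℝ) := {v | eNorm n v < t}

/-!
A nonzero point of `Λ = (ℤⁿ + p/q)·g` is `(w/q)·g` with `w ∈ ℤⁿ ∖ {0}`, `w ≡ p (mod q)`. Write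
`w = k·u` with `k = gcd(w)` and `u` primitive. Since `gcd(p, q) = 1`, `k` is prime to `q`, and
then `u·(τ_{[k r̄]} γ_p)⁻¹` is a primitive vector `≡ e_n (mod q)`. As `SL_n(ℤ)`, `n ≥ 2`, acts
transitively on primitive vectors (Euclidean algorithm by transvections), these are exactly the
vectors `e_n·γ`, `γ ∈ Γ₁(q)`, which label the cosets `(Γ₁(q) ∩ L_n)\Γ₁(q)` bijectively. So
`(k, [γ]) ↦ (k/q)·e_n γ τ_{[k r̄]} γ_p g` parametrizes `Λ ∖ {0}`, and grouping the Siegel sum by `k`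
gives the Theta series. All sums are finite because `Λ` is discrete and `f` has compact support.
-/

section PrimitiveVectors

variable {ι : Type*} [Fintype ι]

theorem Finset.gcd_dvd_gcd_vecMul (v : ι → ℤ) (M : Matrix ι ι ℤ) :
    Finset.univ.gcd v ∣ Finset.univ.gcd (v ᵥ* M) :=
  Finset.dvd_gcd fun _ _ =>
    Finset.dvd_sum fun i _ => (Finset.gcd_dvd (Finset.mem_univ i)).mul_right _

variable [DecidableEq ι]

theorem Matrix.SpecialLinearGroup.vecMul_vecMul_inv {R : Type*} [CommRing R]
    (γ : SpecialLinearGroup ι R) (v : ι → R) : v ᵥ* (γ : Matrix ι ι R) ᵥ* ↑γ⁻¹ = v := by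
  rw [vecMul_vecMul, ← Matrix.SpecialLinearGroup.coe_mul, mul_inv_cancel,
    SpecialLinearGroup.coe_one, vecMul_one]

theorem Matrix.SpecialLinearGroup.vecMul_inv_vecMul {R : Type*} [CommRing R]
    (γ : SpecialLinearGroup ι R) (v : ι → R) : v ᵥ* ↑γ⁻¹ ᵥ* (γ : Matrix ι ι R) = v := by
  simpa using γ⁻¹.vecMul_vecMul_inv v

theorem Matrix.SpecialLinearGroup.vecMul_injective {R : Type*} [CommRing R]
    (γ : SpecialLinearGroup ι R) : Function.Injective fun v : ι → R => v ᵥ* (γ : Matrix ι ι R) :=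
  fun _ _ h => by
    simpa only [γ.vecMul_vecMul_inv] using congrArg (· ᵥ* (↑γ⁻¹ : Matrix ι ι R)) h

theorem Matrix.SpecialLinearGroup.intCast_vecMul {R : Type*} [CommRing R]
    (γ : SpecialLinearGroup ι ℤ) (v : ι → ℤ) :
    (Int.cast ∘ (v ᵥ* (γ : Matrix ι ι ℤ)) : ι → R) =
      (Int.cast ∘ v) ᵥ* ↑(SpecialLinearGroup.map (Int.castRingHom R) γ) :=
  funext (RingHom.map_vecMul (Int.castRingHom R) _ v)

theorem Matrix.SpecialLinearGroup.vecMul_transvection {R : Type*} [CommRing R] (v : ι → R)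
    {i j : ι} (hij : i ≠ j) (c : R) :
    v ᵥ* ↑(SpecialLinearGroup.transvection hij c) = Function.update v j (v j + v i * c) := by
  rw [transvection_coe, vecMul_add, vecMul_one]
  funext b
  rcases eq_or_ne b j with rfl | hb
  · simp [vecMul, dotProduct, single_apply]
  · simp [vecMul, dotProduct, hb.symm, hb]

theorem Finset.gcd_vecMul_specialLinearGroup (v : ι → ℤ) (γ : SpecialLinearGroup ι ℤ) :
    Finset.univ.gcd (v ᵥ* (γ : Matrix ι ι ℤ)) = Finset.univ.gcd v := by
  refine (associated_of_dvd_dvd ?_ (Finset.gcd_dvd_gcd_vecMul v _)).eq_of_normalized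
    Finset.normalize_gcd Finset.normalize_gcd
  simpa only [γ.vecMul_vecMul_inv] using Finset.gcd_dvd_gcd_vecMul (v ᵥ* (γ : Matrix ι ι ℤ)) ↑γ⁻¹

theorem Int.natAbs_emod_lt (a : ℤ) {b : ℤ} (hb : b ≠ 0) : (a % b).natAbs < b.natAbs := by
  have := Int.emod_lt a hb
  have := Int.emod_nonneg a hb
  omega

theorem exists_vecMul_eq_update_emod (v : ι → ℤ) {i j : ι} (hij : i ≠ j) :
    ∃ γ : SpecialLinearGroup ι ℤ, v ᵥ* (γ : Matrix ι ι ℤ) = Function.update v j (v j % v i) :=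
  ⟨SpecialLinearGroup.transvection hij (-(v j / v i)), by
    rw [SpecialLinearGroup.vecMul_transvection, Int.emod_def]
    ring_nf⟩

theorem exists_vecMul_single_eq_single {i j : ι} (hij : i ≠ j) {ε : ℤ} (hε : IsUnit ε) :
    ∃ γ : SpecialLinearGroup ι ℤ, Pi.single i ε ᵥ* (γ : Matrix ι ι ℤ) = Pi.single j 1 := by
  refine ⟨SpecialLinearGroup.transvection hij ε * SpecialLinearGroup.transvection hij.symm (-ε), ?_⟩
  rw [Matrix.SpecialLinearGroup.coe_mul, ← vecMul_vecMul, SpecialLinearGroup.vecMul_transvection,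
    SpecialLinearGroup.vecMul_transvection]
  funext b
  rcases eq_or_ne b i with rfl | hbi
  · simp [hij, Int.isUnit_mul_self hε]
  rcases eq_or_ne b j with rfl | hbj
  · simp [hij, hij.symm, Int.isUnit_mul_self hε]
  · simp [hbi, hbj]

theorem exists_vecMul_single_eq_single_one [Nontrivial ι] (i i₀ : ι) {ε : ℤ} (hε : IsUnit ε) :
    ∃ γ : SpecialLinearGroup ι ℤ, Pi.single i ε ᵥ* (γ : Matrix ι ι ℤ) = Pi.single i₀ 1 := by
  rcases ne_or_eq i i₀ with hi | rfl
  · exact exists_vecMul_single_eq_single hi hε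
  obtain ⟨j, hj⟩ := exists_ne i
  obtain ⟨γ₁, hγ₁⟩ := exists_vecMul_single_eq_single hj.symm hε
  obtain ⟨γ₂, hγ₂⟩ := exists_vecMul_single_eq_single hj isUnit_one
  exact ⟨γ₁ * γ₂, by rw [Matrix.SpecialLinearGroup.coe_mul, ← vecMul_vecMul, hγ₁, hγ₂]⟩

theorem exists_isUnit_eq_single_of_gcd_eq_one {w : ι → ℤ} (hw : Finset.univ.gcd w = 1)
    (hsupp : ∀ i j, i ≠ j → w i ≠ 0 → w j = 0) : ∃ i, IsUnit (w i) ∧ w = Pi.single i (w i) := by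
  obtain ⟨i, hi⟩ : ∃ i, w i ≠ 0 := by
    by_contra! h
    simp [Finset.gcd_eq_zero_iff.mpr fun i _ => h i] at hw
  have hsingle : w = Pi.single i (w i) := funext fun j => by
    rcases eq_or_ne j i with rfl | hj
    · simp
    · rw [Pi.single_eq_of_ne hj, hsupp i j hj.symm hi]
  refine ⟨i, isUnit_of_dvd_one (hw ▸ Finset.dvd_gcd fun j _ => ?_), hsingle⟩
  rw [hsingle]
  rcases eq_or_ne j i with rfl | hj
  · simp
  · simp [hj]

theorem exists_vecMul_eq_single_of_gcd_eq_one [Nontrivial ι] (i₀ : ι) (w : ι → ℤ)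
    (hw : Finset.univ.gcd w = 1) :
    ∃ γ : SpecialLinearGroup ι ℤ, w ᵥ* (γ : Matrix ι ι ℤ) = Pi.single i₀ 1 := by
  induction hN : ∑ i, (w i).natAbs using Nat.strong_induction_on generalizing w with
  | _ N ih =>
  by_cases hpair : ∃ i j, i ≠ j ∧ w i ≠ 0 ∧ w j ≠ 0
  · obtain ⟨i, j, hij, hi, hle⟩ : ∃ i j, i ≠ j ∧ w i ≠ 0 ∧ (w i).natAbs ≤ (w j).natAbs := by
      obtain ⟨i, j, hij, hi, hj⟩ := hpair
      rcases le_total (w i).natAbs (w j).natAbs with h | h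
      exacts [⟨i, j, hij, hi, h⟩, ⟨j, i, hij.symm, hj, h⟩]
    obtain ⟨γ₁, hγ₁⟩ := exists_vecMul_eq_update_emod w hij
    have hlt : ∑ b, (Function.update w j (w j % w i) b).natAbs < N := by
      refine hN ▸ Finset.sum_lt_sum (fun b _ => ?_) ⟨j, Finset.mem_univ j, ?_⟩
      · rcases eq_or_ne b j with rfl | hb
        · rw [Function.update_self]
          exact (Int.natAbs_emod_lt _ hi).le.trans hle
        · rw [Function.update_of_ne hb]
      · rw [Function.update_self]
        exact (Int.natAbs_emod_lt _ hi).trans_le hle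
    obtain ⟨γ₂, hγ₂⟩ := ih _ hlt _ (by rw [← hγ₁, Finset.gcd_vecMul_specialLinearGroup, hw]) rfl
    exact ⟨γ₁ * γ₂, by rw [Matrix.SpecialLinearGroup.coe_mul, ← vecMul_vecMul, hγ₁, hγ₂]⟩
  · push Not at hpair
    obtain ⟨i, hunit, hsingle⟩ := exists_isUnit_eq_single_of_gcd_eq_one hw hpair
    rw [hsingle]
    exact exists_vecMul_single_eq_single_one i i₀ hunit

end PrimitiveVectors

section Cosets

variable {n : ℕ}

theorem intCast_comp_vecMul_ιM (q : ℕ) (γ : SLZ n) (v : Fin n → ℤ) :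
    (Int.cast ∘ (v ᵥ* (γ : Matrix (Fin n) (Fin n) ℤ)) : Fin n → ZMod q) =
      (Int.cast ∘ v) ᵥ* ↑(ιM n q γ) :=
  Matrix.SpecialLinearGroup.intCast_vecMul γ v

theorem intCast_comp_vecMul_ιR (γ : SLZ n) (v : Fin n → ℤ) :
    (Int.cast ∘ (v ᵥ* (γ : Matrix (Fin n) (Fin n) ℤ)) : Fin n → ℝ) =
      (Int.cast ∘ v) ᵥ* ↑(ιR n γ) :=
  Matrix.SpecialLinearGroup.intCast_vecMul γ v

/-- The coset space `(Γ ∩ L_n)\Γ` summed over in `Theta`. -/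
abbrev LCosets (n : ℕ) (Γ : Subgroup (SLZ n)) :=
  Quotient (QuotientGroup.rightRel ((LZ n).subgroupOf Γ))

theorem en_eq_single (hn : 0 < n) : en n = Pi.single ⟨n - 1, by omega⟩ 1 := by
  funext i
  simp [en, Pi.single_apply, Fin.ext_iff]

theorem gcd_en (hn : 0 < n) : Finset.univ.gcd (en n) = 1 := by
  rw [← Finset.normalize_gcd, normalize_eq_one]
  refine isUnit_of_dvd_one ?_
  simpa [en_eq_single hn] using Finset.gcd_dvd (f := en n) (Finset.mem_univ ⟨n - 1, by omega⟩)

theorem intCast_comp_en (q : ℕ) : (Int.cast ∘ en n : Fin n → ZMod q) = enM n q := by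
  funext i
  by_cases h : (i : ℕ) = n - 1 <;> simp [en, enM, h]

theorem cosetVec_mk (Γ : Subgroup (SLZ n)) (γ : Γ) :
    cosetVec n Γ ⟦γ⟧ = en n ᵥ* ((γ : SLZ n) : Matrix (Fin n) (Fin n) ℤ) := rfl

theorem cosetVec_injective (Γ : Subgroup (SLZ n)) : Function.Injective (cosetVec n Γ) := by
  rintro ⟨a⟩ ⟨b⟩ h
  refine Quotient.sound (QuotientGroup.rightRel_apply.mpr (Subgroup.mem_subgroupOf.mpr ?_))
  show en n ᵥ* ↑((b : SLZ n) * (a : SLZ n)⁻¹) = en n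
  rw [Matrix.SpecialLinearGroup.coe_mul, ← vecMul_vecMul]
  have hab : en n ᵥ* ((a : SLZ n) : Matrix (Fin n) (Fin n) ℤ) = en n ᵥ* ↑(b : SLZ n) := h
  rw [← hab, Matrix.SpecialLinearGroup.vecMul_vecMul_inv]

theorem gcd_cosetVec (hn : 0 < n) (Γ : Subgroup (SLZ n)) (c : LCosets n Γ) :
    Finset.univ.gcd (cosetVec n Γ c) = 1 := by
  induction c using Quotient.inductionOn with
  | h γ => rw [cosetVec_mk, Finset.gcd_vecMul_specialLinearGroup, gcd_en hn]

theorem intCast_comp_cosetVec_gamma1 (q : ℕ) (c : LCosets n (Gamma1 n q)) :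
    (Int.cast ∘ cosetVec n (Gamma1 n q) c : Fin n → ZMod q) = enM n q := by
  induction c using Quotient.inductionOn with
  | h γ =>
    rw [cosetVec_mk, intCast_comp_vecMul_ιM, intCast_comp_en]
    exact γ.2

theorem exists_cosetVec_gamma1_eq (hn : 2 ≤ n) (q : ℕ) (v : Fin n → ℤ)
    (hv : Finset.univ.gcd v = 1) (hvq : (Int.cast ∘ v : Fin n → ZMod q) = enM n q) :
    ∃ c : LCosets n (Gamma1 n q), cosetVec n (Gamma1 n q) c = v := by
  have : Nontrivial (Fin n) := Fin.nontrivial_iff_two_le.mpr hn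
  obtain ⟨γ, hγ⟩ := exists_vecMul_eq_single_of_gcd_eq_one ⟨n - 1, by omega⟩ v hv
  have hγv : en n ᵥ* ↑γ⁻¹ = v := by
    rw [en_eq_single (by omega), ← hγ, γ.vecMul_vecMul_inv]
  have hmem : γ⁻¹ ∈ Gamma1 n q := by
    show enM n q ᵥ* ↑(ιM n q γ⁻¹) = enM n q
    rw [← intCast_comp_en, ← intCast_comp_vecMul_ιM, hγv, hvq, intCast_comp_en]
  exact ⟨⟦⟨γ⁻¹, hmem⟩⟧, hγv⟩

end Cosets

section TwistedVectors

variable {n q : ℕ} {p : Fin n → ℤ} {A : ℕ → SLZ n}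

/-- In the paper, `A k = τ_{[k r̄]} γ_p`. -/
def IsTwistFamily (q : ℕ) (p : Fin n → ℤ) (A : ℕ → SLZ n) : Prop :=
  ∀ k : ℕ, 0 < k → k.Coprime q → (k : ZMod q) • (enM n q ᵥ* ↑(ιM n q (A k))) = Int.cast ∘ p

theorem isTwistFamily_mul (r : ℤ) (γp : SLZ n) (T : ℕ → SLZ n)
    (hγp : p = (r • en n) ᵥ* (γp : Matrix (Fin n) (Fin n) ℤ))
    (hT : ∀ k : ℕ, 0 < k → k.Coprime q →
      (k : ZMod q) • (enM n q ᵥ* ↑(ιM n q (T k))) = (r : ZMod q) • enM n q) :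
    IsTwistFamily q p fun k => T k * γp := fun k hk hkq => by
  rw [map_mul, Matrix.SpecialLinearGroup.coe_mul, ← vecMul_vecMul, ← smul_vecMul, hT k hk hkq,
    hγp, intCast_comp_vecMul_ιM, ← intCast_comp_en (n := n) q]
  congr 1
  funext i
  simp

/-- The `k`-th Theta series evaluates `f` at `(1/q) · twistedVec A k c · g`. -/
def twistedVec (A : ℕ → SLZ n) (k : ℕ) (c : LCosets n (Gamma1 n q)) : Fin n → ℤ :=
  (k : ℤ) • (cosetVec n (Gamma1 n q) c ᵥ* ↑(A k))

theorem gcd_twistedVec (hn : 0 < n) (k : ℕ) (c : LCosets n (Gamma1 n q)) :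
    Finset.univ.gcd (twistedVec A k c) = k := by
  change Finset.univ.gcd
    (fun i => (k : ℤ) * (cosetVec n (Gamma1 n q) c ᵥ* (A k : Matrix (Fin n) (Fin n) ℤ)) i) = k
  rw [Finset.gcd_mul_left, Int.normalize_coe_nat, Finset.gcd_vecMul_specialLinearGroup,
    gcd_cosetVec hn, mul_one]

theorem twistedVec_ne_zero (hn : 0 < n) {k : ℕ} (hk : 0 < k) (c : LCosets n (Gamma1 n q)) :
    twistedVec A k c ≠ 0 := fun h => by
  have := gcd_twistedVec (A := A) hn k c
  rw [h, Finset.gcd_eq_zero_iff.mpr fun _ _ => Pi.zero_apply _] at this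
  omega

theorem intCast_comp_twistedVec (hA : IsTwistFamily q p A) {k : ℕ} (hk : 0 < k ∧ k.Coprime q)
    (c : LCosets n (Gamma1 n q)) :
    (Int.cast ∘ twistedVec A k c : Fin n → ZMod q) = Int.cast ∘ p := by
  rw [← hA k hk.1 hk.2, ← intCast_comp_cosetVec_gamma1 q c, ← intCast_comp_vecMul_ιM]
  funext i
  simp [twistedVec]

theorem twistedVec_sigma_injective (hn : 0 < n) :
    Function.Injective fun x : Σ _ : {k : ℕ // 0 < k ∧ k.Coprime q}, LCosets n (Gamma1 n q) =>
      twistedVec A x.1.1 x.2 := by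
  rintro ⟨⟨k, hk⟩, c⟩ ⟨⟨k', hk'⟩, c'⟩ h
  obtain rfl : k = k' := by
    simpa only [gcd_twistedVec hn, Nat.cast_inj] using congrArg Finset.univ.gcd h
  have hc : cosetVec n (Gamma1 n q) c ᵥ* (A k : Matrix (Fin n) (Fin n) ℤ) =
      cosetVec n (Gamma1 n q) c' ᵥ* (A k : Matrix (Fin n) (Fin n) ℤ) :=
    smul_right_injective _ (Int.natCast_ne_zero.mpr hk.1.ne') (h :)
  rw [cosetVec_injective _ ((A k).vecMul_injective hc)]

theorem gcd_gcd_eq_one_of_intCast_eq (hpq : Int.gcd (Finset.univ.gcd p) q = 1) {w : Fin n → ℤ}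
    (hwp : (Int.cast ∘ w : Fin n → ZMod q) = Int.cast ∘ p) :
    Int.gcd (Finset.univ.gcd w) q = 1 := by
  set e := Int.gcd (Finset.univ.gcd w) q
  have hep : (e : ℤ) ∣ Finset.univ.gcd p := Finset.dvd_gcd fun i _ => by
    have hwi : (q : ℤ) ∣ p i - w i :=
      (ZMod.intCast_eq_intCast_iff_dvd_sub _ _ _).mp (congrFun hwp i)
    have hew : (e : ℤ) ∣ w i :=
      (Int.gcd_dvd_left _ _).trans (Finset.gcd_dvd (f := w) (Finset.mem_univ i))
    simpa using dvd_add hew ((Int.gcd_dvd_right (Finset.univ.gcd w) q).trans hwi)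
  exact Nat.dvd_one.mp (hpq ▸ Int.dvd_gcd hep (Int.gcd_dvd_right _ _))

theorem exists_twistedVec_eq (hn : 2 ≤ n) (hpq : Int.gcd (Finset.univ.gcd p) q = 1)
    (hA : IsTwistFamily q p A) {w : Fin n → ℤ} (hw : w ≠ 0)
    (hwp : (Int.cast ∘ w : Fin n → ZMod q) = Int.cast ∘ p) :
    ∃ x : Σ _ : {k : ℕ // 0 < k ∧ k.Coprime q}, LCosets n (Gamma1 n q),
      twistedVec A x.1.1 x.2 = w := by
  obtain ⟨u, hwu, hu⟩ := Finset.extract_gcd w ⟨⟨0, by omega⟩, Finset.mem_univ _⟩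
  set k := (Finset.univ.gcd w).natAbs
  have hkw : (k : ℤ) = Finset.univ.gcd w := Int.natAbs_of_nonneg Finset.Int.finsetGcd_nonneg
  have hk : 0 < k ∧ k.Coprime q := by
    refine ⟨Int.natAbs_pos.mpr fun h => hw ?_, gcd_gcd_eq_one_of_intCast_eq hpq hwp⟩
    exact funext fun i => Finset.gcd_eq_zero_iff.mp h i (Finset.mem_univ i)
  have hwku : w = (k : ℤ) • u := funext fun i => by simp [hkw, hwu i]
  have huq : (Int.cast ∘ u : Fin n → ZMod q) = enM n q ᵥ* ↑(ιM n q (A k)) := by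
    refine ((ZMod.isUnit_iff_coprime k q).mpr hk.2).smul_left_cancel.mp ?_
    rw [hA k hk.1 hk.2, ← hwp, hwku]
    funext i
    simp
  obtain ⟨c, hc⟩ := exists_cosetVec_gamma1_eq hn q (u ᵥ* ↑(A k)⁻¹)
    (by rw [Finset.gcd_vecMul_specialLinearGroup, hu])
    (by rw [intCast_comp_vecMul_ιM, huq, map_inv, Matrix.SpecialLinearGroup.vecMul_vecMul_inv])
  exact ⟨⟨⟨k, hk⟩, c⟩, by rw [twistedVec, hc, Matrix.SpecialLinearGroup.vecMul_inv_vecMul, hwku]⟩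

def twistedEquiv (hn : 2 ≤ n) (hpq : Int.gcd (Finset.univ.gcd p) q = 1)
    (hA : IsTwistFamily q p A) :
    (Σ _ : {k : ℕ // 0 < k ∧ k.Coprime q}, LCosets n (Gamma1 n q)) ≃
      {w : Fin n → ℤ // w ≠ 0 ∧ (Int.cast ∘ w : Fin n → ZMod q) = Int.cast ∘ p} :=
  Equiv.ofBijective
    (fun x => ⟨twistedVec A x.1.1 x.2, twistedVec_ne_zero (by omega) x.1.2.1 x.2,
      intCast_comp_twistedVec hA x.1.2 x.2⟩)
    ⟨fun _ _ h => twistedVec_sigma_injective (by omega) (congrArg Subtype.val h),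
      fun w => (exists_twistedVec_eq hn hpq hA w.2.1 w.2.2).imp fun _ hx => Subtype.ext hx⟩

end TwistedVectors

section AffineLattice

variable {n q : ℕ}

theorem affLat_inter_finite (α : Fin n → ℝ) (g : SLR n) {K : Set (Fin n → ℝ)}
    (hK : IsCompact K) : (affLat n α g ∩ K).Finite := by
  have hcast : Topology.IsClosedEmbedding (Int.cast ∘ · : (Fin n → ℤ) → Fin n → ℝ) :=
    Topology.IsClosedEmbedding.piMap fun _ => Int.isClosedEmbedding_coe_real
  have hK' : IsCompact ((fun x => x ᵥ* ((g⁻¹ : SLR n) : Matrix (Fin n) (Fin n) ℝ) - α) '' K) :=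
    hK.image (by fun_prop)
  refine ((hcast.isCompact_preimage hK').finite_of_discrete.image
    fun v => (fun i => (v i : ℝ) + α i) ᵥ* (g : Matrix (Fin n) (Fin n) ℝ)).subset ?_
  rintro _ ⟨⟨v, rfl⟩, hx⟩
  refine ⟨v, ⟨_, hx, ?_⟩, rfl⟩
  simp only [Matrix.SpecialLinearGroup.vecMul_vecMul_inv]
  funext i
  simp

def scaledPoint (q : ℕ) (g : SLR n) (w : Fin n → ℤ) : Fin n → ℝ :=
  (fun i => (w i : ℝ) / q) ᵥ* (g : Matrix (Fin n) (Fin n) ℝ)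

theorem scaledPoint_injective (hq : q ≠ 0) (g : SLR n) :
    Function.Injective (scaledPoint q g) := by
  intro w w' h
  have := g.vecMul_injective h
  funext i
  have := congrFun this i
  field_simp at this
  exact_mod_cast this

theorem scaledPoint_zero (q : ℕ) (g : SLR n) : scaledPoint q g 0 = 0 := by
  simp [scaledPoint, ← Pi.zero_def]

theorem mem_affLat_div_iff (hq : q ≠ 0) (p : Fin n → ℤ) (g : SLR n) (x : Fin n → ℝ) :
    x ∈ affLat n (fun i => (p i : ℝ) / q) g ↔
      ∃ w : Fin n → ℤ, (Int.cast ∘ w : Fin n → ZMod q) = Int.cast ∘ p ∧ scaledPoint q g w = x := by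
  constructor
  · rintro ⟨v, rfl⟩
    refine ⟨fun i => q * v i + p i, funext fun i => by simp, ?_⟩
    rw [scaledPoint]
    congr 1
    funext i
    push_cast
    field_simp
  · rintro ⟨w, hwp, rfl⟩
    choose v hv using fun i =>
      (ZMod.intCast_eq_intCast_iff_dvd_sub _ _ _).mp (congrFun hwp i).symm
    refine ⟨v, ?_⟩
    rw [scaledPoint]
    congr 1
    funext i
    have hvi : (w i : ℝ) = q * v i + p i := by
      have := congrArg (fun z : ℤ => (z : ℝ)) (hv i)
      push_cast at this
      linarith
    rw [hvi]
    field_simp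

def nonzeroAffLatEquiv (hq : q ≠ 0) (p : Fin n → ℤ) (g : SLR n) :
    {w : Fin n → ℤ // w ≠ 0 ∧ (Int.cast ∘ w : Fin n → ZMod q) = Int.cast ∘ p} ≃
      {x : Fin n → ℝ // x ∈ affLat n (fun i => (p i : ℝ) / q) g ∧ x ≠ 0} :=
  Equiv.ofBijective
    (fun w => ⟨scaledPoint q g w, (mem_affLat_div_iff hq p g _).mpr ⟨w, w.2.2, rfl⟩,
      fun h => w.2.1 (scaledPoint_injective hq g (h.trans (scaledPoint_zero q g).symm))⟩)
    ⟨fun _ _ h => Subtype.ext (scaledPoint_injective hq g (congrArg Subtype.val h)),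
      fun ⟨x, hx, hx0⟩ => by
        obtain ⟨w, hwp, rfl⟩ := (mem_affLat_div_iff hq p g x).mp hx
        exact ⟨⟨w, fun h => hx0 (h ▸ scaledPoint_zero q g), hwp⟩, rfl⟩⟩

theorem div_smul_vecMul_eq_scaledPoint (k : ℕ) (v : Fin n → ℤ) (γ : SLZ n) (g : SLR n) :
    ((k : ℝ) / q) • ((fun i => (v i : ℝ)) ᵥ* ((ιR n γ * g : SLR n) : Matrix (Fin n) (Fin n) ℝ)) =
      scaledPoint q g ((k : ℤ) • (v ᵥ* (γ : Matrix (Fin n) (Fin n) ℤ))) := by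
  rw [Matrix.SpecialLinearGroup.coe_mul, ← vecMul_vecMul, ← smul_vecMul]
  change _ = (fun i => _) ᵥ* _
  congr 1
  rw [← Function.comp_def, ← intCast_comp_vecMul_ιR]
  funext i
  simp [div_mul_eq_mul_div]

end AffineLattice

section FiniteSigmaSums

variable {M : Type*} [AddCommMonoid M] [TopologicalSpace M] {β : Type*} {γ : β → Type*}
  {G : (Σ b, γ b) → M}

theorem tsum_sigma_of_finite_support [ContinuousAdd M] [T3Space M]
    (hG : (Function.support G).Finite) : ∑' x, G x = ∑' b, ∑' c, G ⟨b, c⟩ :=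
  (summable_of_hasFiniteSupport hG).tsum_sigma' fun _ =>
    summable_of_hasFiniteSupport (hG.preimage sigma_mk_injective.injOn)

theorem finite_setOf_tsum_sigma_ne_zero (hG : (Function.support G).Finite) :
    {b | ∑' c, G ⟨b, c⟩ ≠ 0}.Finite := by
  refine (hG.image Sigma.fst).subset fun b hb => ?_
  by_contra hb'
  refine hb (tsum_congr (fun c => ?_) |>.trans tsum_zero)
  by_contra hc
  exact hb' ⟨⟨b, c⟩, hc, rfl⟩

end FiniteSigmaSums

theorem statement12_general (n : ℕ) (hn : 2 ≤ n) (p : Fin n → ℤ) (q : ℕ) (hq : 0 < q)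
    (hpq : Int.gcd (Finset.univ.gcd p) (q : ℤ) = 1)
    (r : ℤ) (γp : SLZ n)
    (hγp : p = Matrix.vecMul (r • en n) ((γp : SLZ n) : Matrix (Fin n) (Fin n) ℤ))
    (f : (Fin n → ℝ) → ℂ) (hfc : HasCompactSupport f)
    (T : ℕ → SLZ n)
    (hT : ∀ k : ℕ, 0 < k → Nat.Coprime k q →
      (k : ZMod q) • Matrix.vecMul (enM n q)
          ((ιM n q (T k) : Matrix.SpecialLinearGroup (Fin n) (ZMod q)) :
            Matrix (Fin n) (Fin n) (ZMod q))
        = ((r : ZMod q)) • enM n q) :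
    ∀ g : SLR n,
      Siegel n f (affLat n (fun i => (p i : ℝ) / (q : ℝ)) g)
        = ∑' k : {k : ℕ // 0 < k ∧ Nat.Coprime k q},
            Theta n (Gamma1 n q) (fun x => f (((k.1 : ℝ) / (q : ℝ)) • x))
              (ιR n (T k.1) * (ιR n γp * g)) ∧
      {k : {k : ℕ // 0 < k ∧ Nat.Coprime k q} |
        Theta n (Gamma1 n q) (fun x => f (((k.1 : ℝ) / (q : ℝ)) • x))
          (ιR n (T k.1) * (ιR n γp * g)) ≠ 0}.Finite := by
  intro g
  let e := (twistedEquiv hn hpq (isTwistFamily_mul r γp T hγp hT)).trans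
    (nonzeroAffLatEquiv hq.ne' p g)
  have hTheta : ∀ k : {k : ℕ // 0 < k ∧ k.Coprime q},
      Theta n (Gamma1 n q) (fun x => f (((k.1 : ℝ) / q) • x)) (ιR n (T k.1) * (ιR n γp * g)) =
        ∑' c, f (e ⟨k, c⟩) := fun k => by
    rw [Theta, ← mul_assoc, ← map_mul]
    exact tsum_congr fun c => congrArg f (div_smul_vecMul_eq_scaledPoint _ _ _ g)
  have hfin : (Function.support fun x => f (e x)).Finite :=
    ((affLat_inter_finite _ g hfc.isCompact).preimage Subtype.val_injective.injOn).preimage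
      e.injective.injOn |>.subset fun x hx => ⟨(e x).2.1, subset_tsupport f hx⟩
  simp only [hTheta]
  exact ⟨(e.tsum_eq (fun x => f x)).symm.trans (tsum_sigma_of_finite_support hfin),
    finite_setOf_tsum_sigma_ne_zero hfin⟩

/-- Lemma 3.4 of the paper: the Siegel transform on `Y_{p/q}` as a sum of
twisted incomplete Eisenstein series. -/
theorem statement12 (n : ℕ) (hn : 2 ≤ n) (p : Fin n → ℤ) (q : ℕ) (hq : 0 < q)
    (hpq : Int.gcd (Finset.univ.gcd p) (q : ℤ) = 1)
    (r : ℤ) (hr : r = Finset.univ.gcd p) (γp : SLZ n)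
    (hγp : p = Matrix.vecMul (r • en n) ((γp : SLZ n) : Matrix (Fin n) (Fin n) ℤ))
    (f : (Fin n → ℝ) → ℂ) (hfm : Measurable f)
    (hfb : ∃ C : ℝ, ∀ x, ‖f x‖ ≤ C) (hfc : HasCompactSupport f)
    (T : ℕ → SLZ n)
    (hT : ∀ k : ℕ, 0 < k → Nat.Coprime k q →
      (k : ZMod q) • Matrix.vecMul (enM n q)
          ((ιM n q (T k) : Matrix.SpecialLinearGroup (Fin n) (ZMod q)) :
            Matrix (Fin n) (Fin n) (ZMod q))
        = ((r : ZMod q)) • enM n q) :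
    ∀ g : SLR n,
      Siegel n f (affLat n (fun i => (p i : ℝ) / (q : ℝ)) g)
        = ∑' k : {k : ℕ // 0 < k ∧ Nat.Coprime k q},
            Theta n (Gamma1 n q) (fun x => f (((k.1 : ℝ) / (q : ℝ)) • x))
              (ιR n (T k.1) * (ιR n γp * g)) ∧
      {k : {k : ℕ // 0 < k ∧ Nat.Coprime k q} |
        Theta n (Gamma1 n q) (fun x => f (((k.1 : ℝ) / (q : ℝ)) • x))
          (ιR n (T k.1) * (ιR n γp * g)) ≠ 0}.Finite :=
  statement12_general n hn p q hq hpq r γp hγp f hfc T hT
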